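/- Lemma (Case 2 of the proof of the paper's Claim 3.5). Let r be an order with levels on X, let (τ₀, ω₀) be a persistence pair of r, let ε > 0, and let ω̃ be an n-simplex with ω̃ ∈ OV(r, ω₀) and ω̃ ∉ SV_ε(r, τ₀, ω₀). Let τ̃ ∈ X^(n−1) satisfy τ₀ ≺_r τ̃, r̂(τ₀) ≤ r̂(τ̃) < r̂(τ₀) + ε, ω̃ ∉ K_V(G(≻_r τ̃), ω₀), and ω̃ ∈ K_V(G(⪰_r τ̃), ω₀). Denote by ω_e the n-cell having τ₀ as a face that lies in K_V(G(≻_r τ₀), ω₀), by ω_e′ the other n-cell having τ₀ as a face, and by ω₁ the ≼_r-maximum n-cell of K_V(G(≻_r τ₀), ω_e′). Suppose there exists a path T in G(≻_r τ₀) from an n-cell of K_V(G(≻_r τ̃), ω̃) to ω_e none of whose vertices lies in K_V(G(≻_r τ̃), ω₀). Set η := (r̂(τ̃) − r̂(τ₀) + ε)/4, let A ⊆ X^(n−1) be the union of the set of edges of the connected component of ω̃ in G(≻_r τ̃), the set of edges of T, the singleton {τ₀}, and the set of edges of the connected component of ω₁ in G(≻_r τ₀), and let s = q(r, η, A). Then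 s ∈ R_ε, (τ̃, ω₀) is a persistence pair of s (i.e., τ_{s,ω₀} = τ̃), and ω̃ ∉ OV(s, ω₀). -/

import Mathlib

/-!
Lowering every `(n-1)`-simplex outside `A` by `η` and raising `A` and all `n`-simplices by `η`
keeps the order among the `n`-cells and among the edges outside `A`, and lifts every edge of `A`
above `τ̃`, because `A` lies above `τ₀` and `r̂(τ̃) - r̂(τ₀) < 2η`. So `G(≻_s τ̃)` is `G(≻_r τ̃)`
with the edges of `A` added. No edge of `A` touches the component `S` of `ω₀` in `G(≻_r τ̃)`:
`S` stays the component of `ω₀`, with maximum `ω₀`. The other coface `b` of `τ̃` is now joined,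
through `ω̃`, the path `T`, the edge `τ₀` and the component of `ω₁`, to `ω₁ ≻ ω₀`. Hence
`(τ̃, ω₀)` is a persistence pair of `s`, and `OV(s, ω₀) = S` does not contain `ω̃`.
-/

open scoped Classical

namespace StableVol

/-- A finite abstract simplicial complex of dimension `n`: a finite family of nonempty
finite subsets of the vertex set, closed under nonempty subsets, in which every element
is contained in an element of cardinality `n+1`. -/
structure NComplex (V : Type*) [DecidableEq V] (n : ℕ) where
  X : Finset (Finset V)
  nonempty_mem : ∀ σ ∈ X, σ.Nonempty
  down_closed : ∀ σ ∈ X, ∀ σ' : Finset V, σ' ⊆ σ → σ'.Nonempty → σ' ∈ X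
  contained_top : ∀ σ ∈ X, ∃ ω ∈ X, σ ⊆ ω ∧ ω.card = n + 1

variable {V : Type*} [DecidableEq V] {n : ℕ}

/-- An `n`-cell is either an `n`-simplex (`some ω`) or the formal cell `ω∞` (`none`). -/
abbrev Cell (V : Type*) := Option (Finset V)

/-- `τ` is a face of the cell `c`.  For `c = some ω` this means that `ω` is an
`n`-simplex of `X` containing `τ`; the faces of `ω∞ = none` are the `(n-1)`-simplices
having exactly one `n`-simplex coface. -/
def faceCell (C : NComplex V n) (τ : Finset V) : Cell V → Prop
  | some ω => ω ∈ C.X ∧ ω.card = n + 1 ∧ τ ⊆ ω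
  | none => {ω | ω ∈ C.X ∧ ω.card = n + 1 ∧ τ ⊆ ω}.ncard = 1

def IsCell (C : NComplex V n) : Cell V → Prop
  | some ω => ω ∈ C.X ∧ ω.card = n + 1
  | none => True

/-- Adjacency in the dual graph, restricted to the edge set `E ⊆ X^(n-1)`. -/
def adj (C : NComplex V n) (E : Set (Finset V)) (c c' : Cell V) : Prop :=
  ∃ τ ∈ E, faceCell C τ c ∧ faceCell C τ c' ∧ c ≠ c'

/-- `KV C E c₀`: the set of `n`-cells in the connected component of `c₀` in the
subgraph of the dual graph with edge set `E`. -/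
def KV (C : NComplex V n) (E : Set (Finset V)) (c₀ : Cell V) : Set (Cell V) :=
  {c | Relation.ReflTransGen (adj C E) c₀ c}

/-- Every `(n-1)`-simplex of `X` is a face of exactly two `n`-cells. -/
def TwoCofaces (C : NComplex V n) : Prop :=
  ∀ τ ∈ C.X, τ.card = n →
    ∃ c₁ c₂ : Cell V, c₁ ≠ c₂ ∧ ∀ c : Cell V, faceCell C τ c ↔ (c = c₁ ∨ c = c₂)

/-- The dual graph (with full edge set `X^(n-1)`) is connected. -/
def DualConn (C : NComplex V n) : Prop :=
  ∀ c c' : Cell V, IsCell C c → IsCell C c' →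
    c' ∈ KV C {τ | τ ∈ C.X ∧ τ.card = n} c

/-- A level function: monotone with respect to strict inclusion of simplices. -/
def IsLevelFun (C : NComplex V n) (lev : Finset V → ℝ) : Prop :=
  ∀ σ ∈ C.X, ∀ σ' ∈ C.X, σ ⊂ σ' → lev σ ≤ lev σ'

/-- `(lev, slt)` is an order with levels on `X`: `lev` is a level function and `slt`
is (the strict form of) a linear order on `X` refining both `lev` and strict
inclusion. -/
def IsOWL (C : NComplex V n) (lev : Finset V → ℝ)
    (slt : Finset V → Finset V → Prop) : Prop :=
  IsLevelFun C lev ∧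
  (∀ σ ∈ C.X, ¬ slt σ σ) ∧
  (∀ σ ∈ C.X, ∀ σ' ∈ C.X, ∀ σ'' ∈ C.X, slt σ σ' → slt σ' σ'' → slt σ σ'') ∧
  (∀ σ ∈ C.X, ∀ σ' ∈ C.X, σ ≠ σ' → slt σ σ' ∨ slt σ' σ) ∧
  (∀ σ ∈ C.X, ∀ σ' ∈ C.X, slt σ σ' → lev σ ≤ lev σ') ∧
  (∀ σ ∈ C.X, ∀ σ' ∈ C.X, σ ⊂ σ' → slt σ σ')

/-- Extension of a strict order on simplices to `n`-cells, `ω∞ = none` being the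
unique maximum. -/
def cslt (slt : Finset V → Finset V → Prop) : Cell V → Cell V → Prop
  | some σ, some σ' => slt σ σ'
  | some _, none => True
  | none, _ => False

/-- `m` is the maximum cell of the set `S` with respect to the order `slt`. -/
def IsMaxCell (slt : Finset V → Finset V → Prop) (S : Set (Cell V)) (m : Cell V) :
    Prop :=
  m ∈ S ∧ ∀ c ∈ S, c ≠ m → cslt slt c m

/-- Edge set of `G(≻ σ₀)`: the `(n-1)`-simplices strictly above `σ₀`. -/
def Egt (C : NComplex V n) (slt : Finset V → Finset V → Prop) (σ₀ : Finset V) :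
    Set (Finset V) :=
  {τ | τ ∈ C.X ∧ τ.card = n ∧ slt σ₀ τ}

/-- Edge set of `G(⪰ σ₀)`. -/
def Ege (C : NComplex V n) (slt : Finset V → Finset V → Prop) (σ₀ : Finset V) :
    Set (Finset V) :=
  {τ | τ ∈ C.X ∧ τ.card = n ∧ (τ = σ₀ ∨ slt σ₀ τ)}

/-- Edge set of `G(lev ≥ s)`. -/
def Elev (C : NComplex V n) (lev : Finset V → ℝ) (s : ℝ) : Set (Finset V) :=
  {τ | τ ∈ C.X ∧ τ.card = n ∧ s ≤ lev τ}

/-- `(τ₀, ω₀)` is a persistence pair of the order `slt`: the two `n`-cells having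
`τ₀` as a face lie in distinct connected components of `G(≻ τ₀)`, and `ω₀` is the
smaller of the two maximum cells of these two components. -/
def IsPersPair (C : NComplex V n) (slt : Finset V → Finset V → Prop)
    (τ₀ ω₀ : Finset V) : Prop :=
  τ₀ ∈ C.X ∧ τ₀.card = n ∧ ω₀ ∈ C.X ∧ ω₀.card = n + 1 ∧
  ∃ c₁ c₂ : Cell V, c₁ ≠ c₂ ∧ faceCell C τ₀ c₁ ∧ faceCell C τ₀ c₂ ∧
    c₂ ∉ KV C (Egt C slt τ₀) c₁ ∧
    ∃ m₂ : Cell V,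
      IsMaxCell slt (KV C (Egt C slt τ₀) c₁) (some ω₀) ∧
      IsMaxCell slt (KV C (Egt C slt τ₀) c₂) m₂ ∧
      cslt slt (some ω₀) m₂

/-- The optimal volume `OV(q, ω₀) = K_V(G(≻_q τ_{q,ω₀}), ω₀)`. -/
def OV (C : NComplex V n) (slt : Finset V → Finset V → Prop) (ω₀ : Finset V) :
    Set (Cell V) :=
  {c | ∃ τ, IsPersPair C slt τ ω₀ ∧ c ∈ KV C (Egt C slt τ) (some ω₀)}

/-- The stable volume `SV_ε(r, τ₀, ω₀) = K_V(G(r̂ ≥ r̂(τ₀) + ε), ω₀)`. -/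
def SV (C : NComplex V n) (lev : Finset V → ℝ) (τ₀ ω₀ : Finset V) (ε : ℝ) :
    Set (Cell V) :=
  KV C (Elev C lev (lev τ₀ + ε)) (some ω₀)

/-- `(qlev, qslt) ∈ R_ε`: an order with levels uniformly `ε/2`-close to `rlev`
satisfying the `(r, ω₀)`-order condition. -/
def InR (C : NComplex V n) (rlev : Finset V → ℝ)
    (rslt : Finset V → Finset V → Prop) (ω₀ : Finset V) (ε : ℝ)
    (qlev : Finset V → ℝ) (qslt : Finset V → Finset V → Prop) : Prop :=
  IsOWL C qlev qslt ∧ (∀ σ ∈ C.X, |qlev σ - rlev σ| < ε / 2) ∧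
  (∀ σ ∈ C.X, rslt σ ω₀ → qslt σ ω₀)

/-- `F_{ε,n}`: the `n`-simplices with level at least `lev τ₀ + ε` that precede `ω₀`. -/
def Fcells (C : NComplex V n) (lev : Finset V → ℝ)
    (slt : Finset V → Finset V → Prop) (τ₀ ω₀ : Finset V) (ε : ℝ) :
    Set (Finset V) :=
  {σ | σ ∈ C.X ∧ σ.card = n + 1 ∧ lev τ₀ + ε ≤ lev σ ∧ slt σ ω₀}

/-- `F_{ε,n-1}`: the `(n-1)`-simplices with level at least `lev τ₀ + ε` that
precede `ω₀`. -/
def Fedges (C : NComplex V n) (lev : Finset V → ℝ)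
    (slt : Finset V → Finset V → Prop) (τ₀ ω₀ : Finset V) (ε : ℝ) :
    Set (Finset V) :=
  {σ | σ ∈ C.X ∧ σ.card = n ∧ lev τ₀ + ε ≤ lev σ ∧ slt σ ω₀}

/-- `τ*(∂z)`: the `ℤ/2ℤ`-sum of the coefficients of `z` over the `n`-simplex
cofaces of `τ`. -/
def bsum (C : NComplex V n) (τ : Finset V) (z : Finset V → ZMod 2) : ZMod 2 :=
  ∑ ω ∈ C.X.filter (fun ω => ω.card = n + 1 ∧ τ ⊆ ω), z ω

/-- A feasible chain `z = ω₀ + Σ_{ω ∈ F_{ε,n}} α_ω ω` with `τ*(∂z) = 0` for all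
`τ ∈ F_{ε,n-1}`. -/
def IsFeasible (C : NComplex V n) (lev : Finset V → ℝ)
    (slt : Finset V → Finset V → Prop) (τ₀ ω₀ : Finset V) (ε : ℝ)
    (z : Finset V → ZMod 2) : Prop :=
  z ω₀ = 1 ∧
  (∀ ω : Finset V, ω ≠ ω₀ → ω ∉ Fcells C lev slt τ₀ ω₀ ε → z ω = 0) ∧
  (∀ τ ∈ Fedges C lev slt τ₀ ω₀ ε, bsum C τ z = 0)

/-- `‖z‖₀`: the number of simplices of `X` with nonzero coefficient in `z`. -/
def norm0 (C : NComplex V n) (z : Finset V → ZMod 2) : ℕ :=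
  (C.X.filter fun ω => z ω ≠ 0).card

/-- The level function of the perturbed order `q(r, η, A)`. -/
noncomputable def pertLev (C : NComplex V n) (rlev : Finset V → ℝ) (η : ℝ)
    (A : Set (Finset V)) : Finset V → ℝ :=
  fun σ => if (σ ∈ C.X ∧ σ.card = n + 1) ∨ σ ∈ A then rlev σ + η else rlev σ - η

/-- The strict order of the perturbed order `q(r, η, A)`. -/
def pertSlt (C : NComplex V n) (rlev : Finset V → ℝ)
    (rslt : Finset V → Finset V → Prop) (η : ℝ) (A : Set (Finset V)) :
    Finset V → Finset V → Prop :=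
  fun σ σ' => pertLev C rlev η A σ < pertLev C rlev η A σ' ∨
    (pertLev C rlev η A σ = pertLev C rlev η A σ' ∧ rslt σ σ')

/-- The `(n-1)`-simplices that are edges of the connected component of `c₀` in the
subgraph with edge set `E`. -/
def compEdges (C : NComplex V n) (E : Set (Finset V)) (c₀ : Cell V) :
    Set (Finset V) :=
  {τ | τ ∈ E ∧ ∃ c, faceCell C τ c ∧ c ∈ KV C E c₀}

/-- `IsPath C E c c' vs es`: `vs` is the vertex list and `es` the edge list of a walk
from `c` to `c'` in the subgraph of the dual graph with edge set `E`. -/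
inductive IsPath (C : NComplex V n) (E : Set (Finset V)) :
    Cell V → Cell V → List (Cell V) → List (Finset V) → Prop
  | nil (c : Cell V) : IsPath C E c c [c] []
  | cons {c c' c'' : Cell V} {vs : List (Cell V)} {es : List (Finset V)}
      {τ : Finset V} : τ ∈ E → faceCell C τ c → faceCell C τ c' → c ≠ c' →
      IsPath C E c' c'' vs es → IsPath C E c c'' (c :: vs) (τ :: es)

lemma NComplex.card_le (C : NComplex V n) {σ : Finset V} (hσ : σ ∈ C.X) : σ.card ≤ n + 1 := by
  obtain ⟨ω, -, hσω, hω⟩ := C.contained_top σ hσ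
  exact hω ▸ Finset.card_le_card hσω

section Components

variable {C : NComplex V n} {E E' : Set (Finset V)}

lemma adj_symm {c c' : Cell V} (h : adj C E c c') : adj C E c' c := by
  obtain ⟨τ, hτ, h, h', hne⟩ := h
  exact ⟨τ, hτ, h', h, hne.symm⟩

lemma mem_KV_self (c : Cell V) : c ∈ KV C E c := Relation.ReflTransGen.refl

lemma mem_KV_symm {c c' : Cell V} (h : c' ∈ KV C E c) : c ∈ KV C E c' := by
  induction h with
  | refl => exact mem_KV_self _
  | tail _ hadj ih => exact Relation.ReflTransGen.head (adj_symm hadj) ih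

lemma mem_KV_trans {a b c : Cell V} (h : b ∈ KV C E a) (h' : c ∈ KV C E b) :
    c ∈ KV C E a :=
  Relation.ReflTransGen.trans h h'

lemma KV_eq_of_mem {c c' : Cell V} (h : c' ∈ KV C E c) : KV C E c' = KV C E c :=
  Set.ext fun _ => ⟨mem_KV_trans h, mem_KV_trans (mem_KV_symm h)⟩

lemma KV_mono (hE : E ⊆ E') (c : Cell V) : KV C E c ⊆ KV C E' c := by
  intro c' h
  induction h with
  | refl => exact mem_KV_self _
  | tail _ hadj ih =>
    obtain ⟨τ, hτ, hadj⟩ := hadj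
    exact ih.tail ⟨τ, hE hτ, hadj⟩

lemma KV_subset_of_forall_adj {S : Set (Cell V)} {c₀ : Cell V} (h₀ : c₀ ∈ S)
    (hS : ∀ c ∈ S, ∀ c', adj C E c c' → c' ∈ S) : KV C E c₀ ⊆ S := by
  intro c hc
  induction hc with
  | refl => exact h₀
  | tail _ hadj ih => exact hS _ ih _ hadj

lemma IsCell.of_faceCell {τ : Finset V} : ∀ {c : Cell V}, faceCell C τ c → IsCell C c
  | none, _ => trivial
  | some _, h => ⟨h.1, h.2.1⟩

lemma IsCell.of_mem_KV {c₀ c : Cell V} (h₀ : IsCell C c₀) (h : c ∈ KV C E c₀) :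
    IsCell C c := by
  induction h with
  | refl => exact h₀
  | tail _ hadj _ =>
    obtain ⟨_, _, _, h, _⟩ := hadj
    exact IsCell.of_faceCell h

lemma setOf_isCell_finite (C : NComplex V n) : {c : Cell V | IsCell C c}.Finite := by
  refine ((C.X.finite_toSet.image some).insert none).subset ?_
  rintro (_ | ω) h
  · exact Set.mem_insert _ _
  · exact Set.mem_insert_of_mem _ ⟨ω, h.1, rfl⟩

lemma KV_union_eq_of_forall_faceCell_notMem {A : Set (Finset V)} {c₀ : Cell V}
    (hA : ∀ τ ∈ A, ∀ c, faceCell C τ c → c ∉ KV C E c₀) :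
    KV C (E ∪ A) c₀ = KV C E c₀ := by
  refine (KV_subset_of_forall_adj (mem_KV_self c₀) ?_).antisymm
    (KV_mono Set.subset_union_left c₀)
  rintro c hc c' ⟨τ, hτ | hτ, h, h', hne⟩
  · exact Relation.ReflTransGen.tail hc ⟨τ, hτ, h, h', hne⟩
  · exact absurd hc (hA τ hτ c h)

lemma mem_KV_or_exists_of_mem_KV_union_singleton {τ : Finset V} {c₀ c : Cell V}
    (h : c ∈ KV C (E ∪ {τ}) c₀) :
    c ∈ KV C E c₀ ∨ ∃ a b, faceCell C τ a ∧ faceCell C τ b ∧ a ∈ KV C E c₀ ∧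
      c ∈ KV C E b := by
  refine KV_subset_of_forall_adj (S := {c | c ∈ KV C E c₀ ∨ ∃ a b, faceCell C τ a ∧
    faceCell C τ b ∧ a ∈ KV C E c₀ ∧ c ∈ KV C E b}) (Or.inl (mem_KV_self c₀)) ?_ h
  rintro x hx y ⟨σ, hσ | rfl, hσx, hσy, hne⟩
  · rcases hx with hx | ⟨a, b, ha, hb, haK, hxK⟩
    · exact Or.inl (hx.tail ⟨σ, hσ, hσx, hσy, hne⟩)
    · exact Or.inr ⟨a, b, ha, hb, haK, hxK.tail ⟨σ, hσ, hσx, hσy, hne⟩⟩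
  · rcases hx with hx | ⟨a, -, ha, -, haK, -⟩
    · exact Or.inr ⟨x, y, hσx, hσy, hx, mem_KV_self y⟩
    · exact Or.inr ⟨a, y, ha, hσy, haK, mem_KV_self y⟩

lemma mem_KV_of_mem_compEdges {c₀ c : Cell V} {τ : Finset V}
    (hτ : τ ∈ compEdges C E c₀) (hc : faceCell C τ c) : c ∈ KV C E c₀ := by
  obtain ⟨hτE, d, hd, hdK⟩ := hτ
  by_cases hdc : d = c
  · exact hdc ▸ hdK
  · exact hdK.tail ⟨τ, hτE, hd, hc, hdc⟩

lemma notMem_KV_of_mem_compEdges {c₀ c d : Cell V} {τ : Finset V}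
    (hc : c ∉ KV C E c₀) (hτ : τ ∈ compEdges C E c) (hd : faceCell C τ d) :
    d ∉ KV C E c₀ :=
  fun hd₀ => hc (mem_KV_trans hd₀ (mem_KV_symm (mem_KV_of_mem_compEdges hτ hd)))

lemma mem_KV_compEdges {c₀ c : Cell V} (h : c ∈ KV C E c₀) :
    c ∈ KV C (compEdges C E c₀) c₀ := by
  induction h with
  | refl => exact mem_KV_self _
  | @tail c c' hc hadj ih =>
    obtain ⟨τ, hτ, h, h', hne⟩ := hadj
    exact ih.tail ⟨τ, ⟨hτ, c, h, hc⟩, h, h', hne⟩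

lemma TwoCofaces.eq_or_eq (htwo : TwoCofaces C) {τ : Finset V} (hτ : τ ∈ C.X)
    (hτn : τ.card = n) {d₁ d₂ c : Cell V} (h₁ : faceCell C τ d₁) (h₂ : faceCell C τ d₂)
    (hne : d₁ ≠ d₂) (hc : faceCell C τ c) : c = d₁ ∨ c = d₂ := by
  obtain ⟨e₁, e₂, -, he⟩ := htwo τ hτ hτn
  rcases (he d₁).1 h₁ with rfl | rfl <;> rcases (he d₂).1 h₂ with rfl | rfl <;>
    rcases (he c).1 hc with rfl | rfl <;> simp_all

end Components

namespace IsPath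

variable {C : NComplex V n} {E E' : Set (Finset V)} {c c' : Cell V} {vs : List (Cell V)}
  {es : List (Finset V)}

lemma edge_mem (h : IsPath C E c c' vs es) {τ : Finset V} (hτ : τ ∈ es) : τ ∈ E := by
  induction h with
  | nil => simp at hτ
  | cons hσ _ _ _ _ ih =>
    rcases List.mem_cons.1 hτ with rfl | hτ
    exacts [hσ, ih hτ]

lemma start_mem (h : IsPath C E c c' vs es) : c ∈ vs := by
  cases h <;> simp

lemma end_mem (h : IsPath C E c c' vs es) : c' ∈ vs := by
  induction h with
  | nil => exact List.mem_singleton_self _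
  | cons _ _ _ _ _ ih => exact List.mem_cons_of_mem _ ih

lemma mem_KV (h : IsPath C E c c' vs es) (hE : ∀ τ ∈ es, τ ∈ E') : c' ∈ KV C E' c := by
  induction h with
  | nil => exact mem_KV_self _
  | cons hσ hf hf' hne _ ih =>
    exact Relation.ReflTransGen.head ⟨_, hE _ List.mem_cons_self, hf, hf', hne⟩
      (ih fun τ hτ => hE τ (List.mem_cons_of_mem _ hτ))

lemma mem_of_faceCell (htwo : TwoCofaces C) (hE : ∀ τ ∈ E, τ ∈ C.X ∧ τ.card = n)
    (h : IsPath C E c c' vs es) {τ : Finset V} (hτ : τ ∈ es) {d : Cell V}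
    (hd : faceCell C τ d) : d ∈ vs := by
  induction h with
  | nil => simp at hτ
  | cons hσ hf hf' hne hp ih =>
    rcases List.mem_cons.1 hτ with rfl | hτ
    · rcases htwo.eq_or_eq (hE _ hσ).1 (hE _ hσ).2 hf hf' hne hd with rfl | rfl
      exacts [List.mem_cons_self, List.mem_cons_of_mem _ hp.start_mem]
    · exact List.mem_cons_of_mem _ (ih hτ)

end IsPath

section Orders

variable {C : NComplex V n} {lev : Finset V → ℝ} {slt : Finset V → Finset V → Prop}

namespace IsOWL

lemma irrefl (hq : IsOWL C lev slt) {σ : Finset V} (hσ : σ ∈ C.X) : ¬ slt σ σ :=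
  hq.2.1 σ hσ

lemma trans (hq : IsOWL C lev slt) {σ σ' σ'' : Finset V} (hσ : σ ∈ C.X) (hσ' : σ' ∈ C.X)
    (hσ'' : σ'' ∈ C.X) (h : slt σ σ') (h' : slt σ' σ'') : slt σ σ'' :=
  hq.2.2.1 σ hσ σ' hσ' σ'' hσ'' h h'

lemma total (hq : IsOWL C lev slt) {σ σ' : Finset V} (hσ : σ ∈ C.X) (hσ' : σ' ∈ C.X)
    (hne : σ ≠ σ') : slt σ σ' ∨ slt σ' σ :=
  hq.2.2.2.1 σ hσ σ' hσ' hne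

lemma lev_le (hq : IsOWL C lev slt) {σ σ' : Finset V} (hσ : σ ∈ C.X) (hσ' : σ' ∈ C.X)
    (h : slt σ σ') : lev σ ≤ lev σ' :=
  hq.2.2.2.2.1 σ hσ σ' hσ' h

lemma cslt_irrefl (hq : IsOWL C lev slt) {c : Cell V} (hc : IsCell C c) :
    ¬ cslt slt c c := by
  cases c with
  | none => exact id
  | some σ => exact hq.irrefl hc.1

lemma cslt_trans (hq : IsOWL C lev slt) {a b c : Cell V} (ha : IsCell C a)
    (hb : IsCell C b) (hc : IsCell C c) (h : cslt slt a b) (h' : cslt slt b c) :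
    cslt slt a c := by
  cases a with
  | none => exact h.elim
  | some x =>
    cases b with
    | none => exact h'.elim
    | some y =>
      cases c with
      | none => trivial
      | some z => exact hq.trans ha.1 hb.1 hc.1 h h'

lemma cslt_total (hq : IsOWL C lev slt) {a b : Cell V} (ha : IsCell C a) (hb : IsCell C b)
    (hne : a ≠ b) : cslt slt a b ∨ cslt slt b a := by
  cases a with
  | none =>
    cases b with
    | none => exact absurd rfl hne
    | some y => exact Or.inr trivial
  | some x =>
    cases b with
    | none => exact Or.inl trivial
    | some y => exact hq.total ha.1 hb.1 fun h => hne (congrArg some h)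

lemma exists_isMaxCell (hq : IsOWL C lev slt) {S : Set (Cell V)} (hfin : S.Finite)
    (hne : S.Nonempty) (hS : ∀ c ∈ S, IsCell C c) : ∃ m, IsMaxCell slt S m := by
  -- a maximum: an element of `S` with the fewest elements of `S` above it
  let above : Cell V → Set (Cell V) := fun m => {c | c ∈ S ∧ cslt slt m c}
  obtain ⟨m, hm, hmin⟩ := S.exists_min_image (fun m => (above m).ncard) hfin hne
  refine ⟨m, hm, fun c hc hcm => (hq.cslt_total (hS c hc) (hS m hm) hcm).resolve_right ?_⟩
  intro hmc
  have hsub : above c ⊂ above m :=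
    (Set.ssubset_iff_of_subset (s := above c) (t := above m) fun d hd =>
      ⟨hd.1, hq.cslt_trans (hS m hm) (hS c hc) (hS d hd.1) hmc hd.2⟩).2
      ⟨c, ⟨hc, hmc⟩, fun h => hq.cslt_irrefl (hS c hc) h.2⟩
  exact (hmin c hc).not_gt (Set.ncard_lt_ncard hsub (hfin.subset fun d hd => hd.1))

lemma exists_isMaxCell_KV (hq : IsOWL C lev slt) {E : Set (Finset V)} {c₀ : Cell V}
    (h₀ : IsCell C c₀) : ∃ m, IsMaxCell slt (KV C E c₀) m :=
  hq.exists_isMaxCell ((setOf_isCell_finite C).subset fun _ => IsCell.of_mem_KV h₀)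
    ⟨c₀, mem_KV_self c₀⟩ fun _ => IsCell.of_mem_KV h₀

end IsOWL

lemma IsMaxCell.not_cslt (hq : IsOWL C lev slt) {S : Set (Cell V)} {m c : Cell V}
    (hS : ∀ c ∈ S, IsCell C c) (hm : IsMaxCell slt S m) (hc : c ∈ S) : ¬ cslt slt m c := by
  intro hmc
  rcases eq_or_ne c m with rfl | hcm
  · exact hq.cslt_irrefl (hS c hc) hmc
  · exact hq.cslt_irrefl (hS c hc)
      (hq.cslt_trans (hS c hc) (hS m hm.1) (hS c hc) (hm.2 c hc hcm) hmc)

lemma IsMaxCell.unique (hq : IsOWL C lev slt) {S : Set (Cell V)} {m m' : Cell V}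
    (hS : ∀ c ∈ S, IsCell C c) (hm : IsMaxCell slt S m) (hm' : IsMaxCell slt S m') :
    m = m' :=
  by_contra fun hne => hm.not_cslt hq hS hm'.1 (hm'.2 m hm.1 hne)

lemma IsMaxCell.cslt_of_cslt (hq : IsOWL C lev slt) {S : Set (Cell V)} {m c d : Cell V}
    (hS : ∀ c ∈ S, IsCell C c) (hm : IsMaxCell slt S m) (hc : c ∈ S) (hd : IsCell C d)
    (h : cslt slt d c) : cslt slt d m := by
  rcases eq_or_ne c m with rfl | hcm
  exacts [h, hq.cslt_trans hd (hS c hc) (hS m hm.1) h (hm.2 c hc hcm)]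

lemma Egt_anti (hq : IsOWL C lev slt) {σ σ' : Finset V} (hσ : σ ∈ C.X) (hσ' : σ' ∈ C.X)
    (h : slt σ σ') : Egt C slt σ' ⊆ Egt C slt σ :=
  fun _ ⟨hτX, hτn, hlt⟩ => ⟨hτX, hτn, hq.trans hσ hσ' hτX h hlt⟩

lemma Egt_subset_Ege (σ : Finset V) : Egt C slt σ ⊆ Ege C slt σ :=
  fun _ ⟨hτX, hτn, hlt⟩ => ⟨hτX, hτn, Or.inr hlt⟩

lemma Ege_subset_union (σ : Finset V) : Ege C slt σ ⊆ Egt C slt σ ∪ {σ} := by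
  rintro τ ⟨hτX, hτn, rfl | hlt⟩
  exacts [Or.inr rfl, Or.inl ⟨hτX, hτn, hlt⟩]

lemma IsOWL.lev_le_of_mem_Ege (hq : IsOWL C lev slt) {σ τ : Finset V} (hσ : σ ∈ C.X)
    (hτ : τ ∈ Ege C slt σ) : lev σ ≤ lev τ := by
  rcases hτ with ⟨hτX, -, rfl | hlt⟩
  exacts [le_rfl, hq.lev_le hσ hτX hlt]

namespace IsPersPair

variable {τ₀ ω₀ : Finset V}

lemma isMaxCell (h : IsPersPair C slt τ₀ ω₀) :
    IsMaxCell slt (KV C (Egt C slt τ₀) (some ω₀)) (some ω₀) := by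
  obtain ⟨-, -, -, -, c₁, -, -, -, -, -, -, hmax, -⟩ := h
  rwa [KV_eq_of_mem hmax.1]

lemma other_coface_notMem_and_cslt (hq : IsOWL C lev slt) (htwo : TwoCofaces C) (h : IsPersPair C slt τ₀ ω₀)
    {e e' m : Cell V} (he : faceCell C τ₀ e) (he' : faceCell C τ₀ e') (hee : e ≠ e')
    (hin : e ∈ KV C (Egt C slt τ₀) (some ω₀)) (hm : IsMaxCell slt (KV C (Egt C slt τ₀) e') m) :
    e' ∉ KV C (Egt C slt τ₀) (some ω₀) ∧ cslt slt (some ω₀) m := by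
  obtain ⟨hτ₀, hτ₀n, -, -, c₁, c₂, hne, hf₁, hf₂, hsep, m₂, hmax₁, hmax₂, hlt⟩ := h
  rw [KV_eq_of_mem hmax₁.1] at hin ⊢
  have he₁ : e = c₁ := (htwo.eq_or_eq hτ₀ hτ₀n hf₁ hf₂ hne he).resolve_right
    fun h => hsep (h ▸ hin)
  have he'₂ : e' = c₂ := (htwo.eq_or_eq hτ₀ hτ₀n hf₁ hf₂ hne he').resolve_left
    fun h => hee (he₁.trans h.symm)
  subst he₁ he'₂
  exact ⟨hsep, hm.unique hq (fun _ => IsCell.of_mem_KV (IsCell.of_faceCell he')) hmax₂ ▸ hlt⟩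

lemma of_isMaxCell {τ : Finset V} (hτ : τ ∈ C.X) (hτn : τ.card = n) (hω₀ : ω₀ ∈ C.X)
    (hω₀n : ω₀.card = n + 1) {a b m : Cell V} (hfa : faceCell C τ a) (hfb : faceCell C τ b)
    (ha : a ∈ KV C (Egt C slt τ) (some ω₀)) (hb : b ∉ KV C (Egt C slt τ) (some ω₀))
    (hω₀max : IsMaxCell slt (KV C (Egt C slt τ) (some ω₀)) (some ω₀))
    (hm : IsMaxCell slt (KV C (Egt C slt τ) b) m) (hlt : cslt slt (some ω₀) m) :
    IsPersPair C slt τ ω₀ := by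
  rw [← KV_eq_of_mem ha] at hb hω₀max
  exact ⟨hτ, hτn, hω₀, hω₀n, a, b, fun h => hb (h ▸ mem_KV_self a), hfa, hfb, hb, m,
    hω₀max, hm, hlt⟩

/-- If `τ ≺ τ'` were both paired with `ω₀`, the component of `ω₀` in `G(≻ τ)` would contain
both sides of `τ'`, hence a cell above `ω₀`. -/
lemma unique (hq : IsOWL C lev slt) {τ τ' : Finset V} (h : IsPersPair C slt τ ω₀)
    (h' : IsPersPair C slt τ' ω₀) : τ = τ' := by
  wlog hlt : slt τ τ' generalizing τ τ'
  · by_contra hne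
    exact hne (this h' h ((hq.total h.1 h'.1 hne).resolve_left hlt)).symm
  obtain ⟨hτ', hτ'n, -, -, c₁, c₂, hne, hf₁, hf₂, -, m₂, hmax₁, hmax₂, hlt₂⟩ := h'
  have hE := Egt_anti hq h.1 hτ' hlt
  have hc₁ : c₁ ∈ KV C (Egt C slt τ) (some ω₀) := mem_KV_symm (KV_mono hE _ hmax₁.1)
  have hc₂ : c₂ ∈ KV C (Egt C slt τ) (some ω₀) :=
    hc₁.tail ⟨τ', ⟨hτ', hτ'n, hlt⟩, hf₁, hf₂, hne⟩
  have hm₂ : m₂ ∈ KV C (Egt C slt τ) (some ω₀) := mem_KV_trans hc₂ (KV_mono hE _ hmax₂.1)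
  exact absurd hlt₂ (h.isMaxCell.not_cslt hq
    (fun _ => IsCell.of_mem_KV (show IsCell C (some ω₀) from ⟨h.2.2.1, h.2.2.2.1⟩)) hm₂)

end IsPersPair

lemma OV_eq_KV (hq : IsOWL C lev slt) {τ ω₀ : Finset V} (h : IsPersPair C slt τ ω₀) :
    OV C slt ω₀ = KV C (Egt C slt τ) (some ω₀) :=
  Set.ext fun _ => ⟨fun ⟨_, h', hc⟩ => h'.unique hq h ▸ hc, fun hc => ⟨τ, h, hc⟩⟩

end Orders

section Perturbation

variable {C : NComplex V n} {rlev : Finset V → ℝ} {rslt : Finset V → Finset V → Prop}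
  {η : ℝ} {A : Set (Finset V)}

lemma pertLev_of_card_eq {σ : Finset V} (hσ : σ ∈ C.X) (hσn : σ.card = n + 1) :
    pertLev C rlev η A σ = rlev σ + η :=
  if_pos (Or.inl ⟨hσ, hσn⟩)

lemma pertLev_of_mem {σ : Finset V} (hσ : σ ∈ A) : pertLev C rlev η A σ = rlev σ + η :=
  if_pos (Or.inr hσ)

lemma pertLev_of_notMem {σ : Finset V} (hσn : σ.card ≠ n + 1) (hσ : σ ∉ A) :
    pertLev C rlev η A σ = rlev σ - η :=
  if_neg (by rintro (⟨-, h⟩ | h) <;> contradiction)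

lemma pertLev_le (hη : 0 ≤ η) (σ : Finset V) : pertLev C rlev η A σ ≤ rlev σ + η := by
  unfold pertLev; split_ifs <;> linarith

lemma sub_le_pertLev (hη : 0 ≤ η) (σ : Finset V) : rlev σ - η ≤ pertLev C rlev η A σ := by
  unfold pertLev; split_ifs <;> linarith

lemma abs_pertLev_sub (hη : 0 ≤ η) (σ : Finset V) : |pertLev C rlev η A σ - rlev σ| = η := by
  unfold pertLev; split_ifs <;> simp [abs_of_nonneg hη]

lemma pertLev_mono (hr : IsOWL C rlev rslt) (hη : 0 ≤ η) (hA : ∀ τ ∈ A, τ.card = n)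
    {σ σ' : Finset V} (hσ : σ ∈ C.X) (hσ' : σ' ∈ C.X) (hss : σ ⊂ σ') :
    pertLev C rlev η A σ ≤ pertLev C rlev η A σ' := by
  have hlev := hr.1 σ hσ σ' hσ' hss
  by_cases hP : (σ ∈ C.X ∧ σ.card = n + 1) ∨ σ ∈ A
  · -- `σ` has at least `n` vertices, so its strict superset `σ'` is an `n`-simplex
    have hσ'n : σ'.card = n + 1 := by
      have := Finset.card_lt_card hss
      have := C.card_le hσ'
      rcases hP with ⟨-, h⟩ | h
      · omega
      · have := hA σ h; omega
    rw [pertLev_of_card_eq hσ' hσ'n]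
    linarith [pertLev_le (rlev := rlev) (A := A) (C := C) hη σ]
  · rw [pertLev, if_neg hP]
    linarith [sub_le_pertLev (rlev := rlev) (A := A) (C := C) hη σ']

lemma isOWL_pert (hr : IsOWL C rlev rslt) (hη : 0 ≤ η) (hA : ∀ τ ∈ A, τ.card = n) :
    IsOWL C (pertLev C rlev η A) (pertSlt C rlev rslt η A) := by
  refine ⟨fun σ hσ σ' hσ' hss => pertLev_mono hr hη hA hσ hσ' hss, ?_, ?_, ?_, ?_, ?_⟩
  · rintro σ hσ (h | ⟨-, h⟩)
    exacts [lt_irrefl _ h, hr.irrefl hσ h]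
  · rintro σ hσ σ' hσ' σ'' hσ'' (h | ⟨h, hs⟩) (h' | ⟨h', hs'⟩)
    · exact Or.inl (h.trans h')
    · exact Or.inl (h' ▸ h)
    · exact Or.inl (h ▸ h')
    · exact Or.inr ⟨h.trans h', hr.trans hσ hσ' hσ'' hs hs'⟩
  · intro σ hσ σ' hσ' hne
    rcases lt_trichotomy (pertLev C rlev η A σ) (pertLev C rlev η A σ') with h | h | h
    · exact Or.inl (Or.inl h)
    · exact (hr.total hσ hσ' hne).imp (fun hs => Or.inr ⟨h, hs⟩) fun hs => Or.inr ⟨h.symm, hs⟩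
    · exact Or.inr (Or.inl h)
  · rintro σ - σ' - (h | ⟨h, -⟩)
    exacts [h.le, h.le]
  · intro σ hσ σ' hσ' hss
    rcases (pertLev_mono hr hη hA hσ hσ' hss).lt_or_eq with h | h
    exacts [Or.inl h, Or.inr ⟨h, hr.2.2.2.2.2 σ hσ σ' hσ' hss⟩]

lemma pertSlt_iff_of_offset (hr : IsOWL C rlev rslt) {σ σ' : Finset V} (hσ : σ ∈ C.X)
    (hσ' : σ' ∈ C.X) {d : ℝ} (h : pertLev C rlev η A σ = rlev σ + d)
    (h' : pertLev C rlev η A σ' = rlev σ' + d) :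
    pertSlt C rlev rslt η A σ σ' ↔ rslt σ σ' := by
  rw [pertSlt, h, h', add_lt_add_iff_right, add_left_inj]
  constructor
  · rintro (hlt | ⟨-, hs⟩)
    · have hne : σ ≠ σ' := by rintro rfl; exact lt_irrefl _ hlt
      exact (hr.total hσ hσ' hne).resolve_right fun hs => (hr.lev_le hσ' hσ hs).not_gt hlt
    · exact hs
  · intro hs
    exact (hr.lev_le hσ hσ' hs).lt_or_eq.imp_right fun h => ⟨h, hs⟩

lemma cslt_pertSlt_iff (hr : IsOWL C rlev rslt) {c c' : Cell V} (hc : IsCell C c)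
    (hc' : IsCell C c') : cslt (pertSlt C rlev rslt η A) c c' ↔ cslt rslt c c' := by
  cases c with
  | none => exact Iff.rfl
  | some σ =>
    cases c' with
    | none => exact Iff.rfl
    | some σ' =>
      exact pertSlt_iff_of_offset hr hc.1 hc'.1 (pertLev_of_card_eq hc.1 hc.2)
        (pertLev_of_card_eq hc'.1 hc'.2)

lemma IsMaxCell.pertSlt (hr : IsOWL C rlev rslt) {S : Set (Cell V)} {m : Cell V}
    (hS : ∀ c ∈ S, IsCell C c) (h : IsMaxCell rslt S m) :
    IsMaxCell (pertSlt C rlev rslt η A) S m :=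
  ⟨h.1, fun c hc hne => (cslt_pertSlt_iff hr (hS c hc) (hS m h.1)).2 (h.2 c hc hne)⟩

lemma inR_pert (hr : IsOWL C rlev rslt) (hη : 0 ≤ η) {ε : ℝ} (hηε : η < ε / 2)
    (hA : ∀ τ ∈ A, τ.card = n) {ω₀ : Finset V} (hω₀ : ω₀ ∈ C.X) (hω₀n : ω₀.card = n + 1) :
    InR C rlev rslt ω₀ ε (pertLev C rlev η A) (pertSlt C rlev rslt η A) := by
  refine ⟨isOWL_pert hr hη hA, fun σ _ => (abs_pertLev_sub hη σ).trans_lt hηε, fun σ hσ hlt => ?_⟩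
  have hle : pertLev C rlev η A σ ≤ pertLev C rlev η A ω₀ := by
    rw [pertLev_of_card_eq hω₀ hω₀n]
    linarith [pertLev_le (rlev := rlev) (A := A) (C := C) hη σ, hr.lev_le hσ hω₀ hlt]
  exact hle.lt_or_eq.imp_right fun h => ⟨h, hlt⟩

lemma Egt_pertSlt_eq (hr : IsOWL C rlev rslt) {σ₀ τ : Finset V} (hσ₀ : σ₀ ∈ C.X)
    (hτ : τ ∈ C.X) (hτn : τ.card = n) (hτA : τ ∉ A) (hA : A ⊆ Ege C rslt σ₀)
    (hη : rlev τ - rlev σ₀ < 2 * η) :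
    Egt C (pertSlt C rlev rslt η A) τ = Egt C rslt τ ∪ A := by
  have hτlev : pertLev C rlev η A τ = rlev τ + -η := by
    rw [pertLev_of_notMem (by omega) hτA, sub_eq_add_neg]
  ext τ'
  by_cases hτ'A : τ' ∈ A
  · obtain ⟨hτ'X, hτ'n, -⟩ := hA hτ'A
    refine iff_of_true ⟨hτ'X, hτ'n, Or.inl ?_⟩ (Or.inr hτ'A)
    rw [hτlev, pertLev_of_mem hτ'A]
    linarith [hr.lev_le_of_mem_Ege hσ₀ (hA hτ'A)]
  · simp only [Egt, Set.mem_union, hτ'A, or_false]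
    refine and_congr_right fun hτ'X => and_congr_right fun hτ'n => ?_
    exact pertSlt_iff_of_offset hr hτ hτ'X hτlev
      (by rw [pertLev_of_notMem (by omega) hτ'A, sub_eq_add_neg])

end Perturbation

section CaseTwo

variable {C : NComplex V n} {slt : Finset V → Finset V → Prop}

/-- The union is the edge set `A` of the perturbation: none of its edges touches the component
of `ω₀` in `G(≻ τ̃)`. -/
lemma notMem_KV_of_faceCell_case_two (htwo : TwoCofaces C) {τ₀ τt ω₀ ωt : Finset V}
    (hτ₀ : τ₀ ∈ C.X) (hτ₀n : τ₀.card = n)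
    (hS : KV C (Egt C slt τt) (some ω₀) ⊆ KV C (Egt C slt τ₀) (some ω₀))
    (hωt : (some ωt : Cell V) ∉ KV C (Egt C slt τt) (some ω₀))
    {ωe ωe' ω₁ cstart : Cell V} {vs : List (Cell V)} {es : List (Finset V)}
    (hfe : faceCell C τ₀ ωe) (hfe' : faceCell C τ₀ ωe') (hee : ωe ≠ ωe')
    (hsep : ωe' ∉ KV C (Egt C slt τ₀) (some ω₀)) (hω₁ : ω₁ ∈ KV C (Egt C slt τ₀) ωe')
    (hT : IsPath C (Egt C slt τ₀) cstart ωe vs es)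
    (havoid : ∀ c ∈ vs, c ∉ KV C (Egt C slt τt) (some ω₀)) {τ : Finset V}
    (hτ : τ ∈ compEdges C (Egt C slt τt) (some ωt) ∪ {τ | τ ∈ es} ∪ {τ₀} ∪
      compEdges C (Egt C slt τ₀) ω₁)
    {c : Cell V} (hc : faceCell C τ c) : c ∉ KV C (Egt C slt τt) (some ω₀) := by
  intro hcS
  rcases hτ with ((hτ | hτ) | rfl) | hτ
  · exact notMem_KV_of_mem_compEdges hωt hτ hc hcS
  · exact havoid c (hT.mem_of_faceCell htwo (fun _ h => ⟨h.1, h.2.1⟩) hτ hc) hcS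
  · rcases htwo.eq_or_eq hτ₀ hτ₀n hfe hfe' hee hc with rfl | rfl
    · exact havoid c hT.end_mem hcS
    · exact hsep (hS hcS)
  · exact notMem_KV_of_mem_compEdges (fun h => hsep (mem_KV_trans h (mem_KV_symm hω₁)))
      hτ hc (hS hcS)

end CaseTwo

theorem case_two_of_claim_general
    (C : NComplex V n) (htwo : TwoCofaces C)
    (rlev : Finset V → ℝ) (rslt : Finset V → Finset V → Prop)
    (hr : IsOWL C rlev rslt)
    (τ₀ ω₀ : Finset V) (hpair : IsPersPair C rslt τ₀ ω₀)
    (ε : ℝ) (hε : 0 < ε)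
    (ωt : Finset V)
    (τt : Finset V) (hτtX : τt ∈ C.X) (hτtc : τt.card = n)
    (hτt₁ : rslt τ₀ τt) (hτt₂ : rlev τ₀ ≤ rlev τt) (hτt₃ : rlev τt < rlev τ₀ + ε)
    (hτt₄ : (some ωt : Cell V) ∉ KV C (Egt C rslt τt) (some ω₀))
    (hτt₅ : (some ωt : Cell V) ∈ KV C (Ege C rslt τt) (some ω₀))
    (ωe ωe' : Cell V) (hfe : faceCell C τ₀ ωe) (hfe' : faceCell C τ₀ ωe')
    (hee : ωe ≠ ωe') (hin : ωe ∈ KV C (Egt C rslt τ₀) (some ω₀))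
    (ω₁ : Cell V) (hω₁ : IsMaxCell rslt (KV C (Egt C rslt τ₀) ωe') ω₁)
    (cstart : Cell V) (hcst : cstart ∈ KV C (Egt C rslt τt) (some ωt))
    (vs : List (Cell V)) (es : List (Finset V))
    (hT : IsPath C (Egt C rslt τ₀) cstart ωe vs es)
    (havoid : ∀ c ∈ vs, c ∉ KV C (Egt C rslt τt) (some ω₀)) :
    ∀ η : ℝ, η = (rlev τt - rlev τ₀ + ε) / 4 →
      ∀ A : Set (Finset V),
        A = compEdges C (Egt C rslt τt) (some ωt) ∪ {τ | τ ∈ es} ∪ {τ₀} ∪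
          compEdges C (Egt C rslt τ₀) ω₁ →
        InR C rlev rslt ω₀ ε (pertLev C rlev η A) (pertSlt C rlev rslt η A) ∧
        IsPersPair C (pertSlt C rlev rslt η A) τt ω₀ ∧
        (∀ τ : Finset V,
          IsPersPair C (pertSlt C rlev rslt η A) τ ω₀ → τ = τt) ∧
        (some ωt : Cell V) ∉ OV C (pertSlt C rlev rslt η A) ω₀ := by
  intro η hη A hA
  have ⟨hτ₀X, hτ₀n, hω₀X, hω₀n, _⟩ := hpair
  have hη₀ : 0 ≤ η := by rw [hη]; linarith
  have hE : Egt C rslt τt ⊆ Egt C rslt τ₀ := Egt_anti hr hτ₀X hτtX hτt₁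
  obtain ⟨hsep, hω₀ω₁⟩ := hpair.other_coface_notMem_and_cslt hr htwo hfe hfe' hee hin hω₁
  -- `τ̃` joins `a`, on the side of `ω₀`, to `b`, on the side of `ω̃`
  obtain ⟨a, b, hfa, hfb, ha, hb⟩ := (mem_KV_or_exists_of_mem_KV_union_singleton
    (KV_mono (Ege_subset_union τt) _ hτt₅)).resolve_left hτt₄
  have hAS := fun τ (hτ : τ ∈ A) c => notMem_KV_of_faceCell_case_two htwo hτ₀X hτ₀n
    (KV_mono hE _) hτt₄ hfe hfe' hee hsep hω₁.1 hT havoid (hA ▸ hτ) (c := c)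
  have hAτ₀ : A ⊆ Ege C rslt τ₀ := by
    subst hA
    rintro τ (((hτ | hτ) | rfl) | hτ)
    exacts [Egt_subset_Ege _ (hE hτ.1), Egt_subset_Ege _ (hT.edge_mem hτ),
      ⟨hτ₀X, hτ₀n, Or.inl rfl⟩, Egt_subset_Ege _ hτ.1]
  have hEs : Egt C (pertSlt C rlev rslt η A) τt = Egt C rslt τt ∪ A :=
    Egt_pertSlt_eq hr hτ₀X hτtX hτtc (fun h => hAS τt h a hfa ha) hAτ₀ (by rw [hη]; linarith)
  have hSs : KV C (Egt C rslt τt ∪ A) (some ω₀) = KV C (Egt C rslt τt) (some ω₀) :=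
    KV_union_eq_of_forall_faceCell_notMem hAS
  -- `b` reaches `ω₁` through `ω̃`, the path `T`, the edge `τ₀` and the component of `ω₁`
  have hω₁b : ω₁ ∈ KV C (Egt C rslt τt ∪ A) b := by
    have hsub : ∀ τ ∈ A, τ ∈ Egt C rslt τt ∪ A := fun τ => Or.inr
    subst hA
    refine mem_KV_trans (KV_mono Set.subset_union_left _ (mem_KV_trans hb hcst)) ?_
    refine mem_KV_trans (hT.mem_KV fun τ hτ => hsub τ (Or.inl (Or.inl (Or.inr hτ)))) ?_
    refine mem_KV_trans (.single ⟨τ₀, hsub τ₀ (Or.inl (Or.inr rfl)), hfe, hfe', hee⟩) ?_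
    exact KV_mono (fun τ hτ => hsub τ (Or.inr hτ)) _
      (mem_KV_symm (mem_KV_compEdges (mem_KV_symm hω₁.1)))
  have hs := isOWL_pert hr hη₀ fun τ hτ => (hAτ₀ hτ).2.1
  have hω₀cell : IsCell C (some ω₀) := ⟨hω₀X, hω₀n⟩
  obtain ⟨m, hm⟩ := hs.exists_isMaxCell_KV (E := Egt C (pertSlt C rlev rslt η A) τt)
    (IsCell.of_faceCell hfb)
  have hω₀m : cslt (pertSlt C rlev rslt η A) (some ω₀) m := by
    rw [hEs] at hm
    exact hm.cslt_of_cslt hs (fun _ => IsCell.of_mem_KV (.of_faceCell hfb)) hω₁b hω₀cell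
      ((cslt_pertSlt_iff hr hω₀cell (IsCell.of_mem_KV (.of_faceCell hfe') hω₁.1)).2 hω₀ω₁)
  have hpair' : IsPersPair C (pertSlt C rlev rslt η A) τt ω₀ := by
    refine .of_isMaxCell hτtX hτtc hω₀X hω₀n hfa hfb ?_ ?_ ?_ hm hω₀m <;> rw [hEs, hSs]
    · exact ha
    · exact fun h => hτt₄ (mem_KV_trans h hb)
    · exact IsMaxCell.pertSlt hr (fun _ => IsCell.of_mem_KV hω₀cell)
        ⟨mem_KV_self _, fun c hc => hpair.isMaxCell.2 c (KV_mono hE _ hc)⟩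
  refine ⟨inR_pert hr hη₀ (by rw [hη]; linarith) (fun τ hτ => (hAτ₀ hτ).2.1) hω₀X hω₀n,
    hpair', fun τ h => h.unique hs hpair', ?_⟩
  rwa [OV_eq_KV hs hpair', hEs, hSs]

/-- Case 2 of the proof of Claim 3.5: if there is a path `T` in
`G(≻_r τ₀)` from the component of `ω̃` in `G(≻_r τ̃)` to `ω_e` avoiding
`K_V(G(≻_r τ̃), ω₀)`, then the perturbed order `s = q(r, η, A)` lies in `R_ε`,
`(τ̃, ω₀)` is a persistence pair of `s`, and its optimal volume avoids `ω̃`. -/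
theorem case_two_of_claim
    (hn : 2 ≤ n) (C : NComplex V n) (htwo : TwoCofaces C) (hconn : DualConn C)
    (rlev : Finset V → ℝ) (rslt : Finset V → Finset V → Prop)
    (hr : IsOWL C rlev rslt)
    (τ₀ ω₀ : Finset V) (hpair : IsPersPair C rslt τ₀ ω₀)
    (ε : ℝ) (hε : 0 < ε)
    (ωt : Finset V) (hωtX : ωt ∈ C.X) (hωtc : ωt.card = n + 1)
    (hOV : (some ωt : Cell V) ∈ OV C rslt ω₀)
    (hSV : (some ωt : Cell V) ∉ SV C rlev τ₀ ω₀ ε)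
    (τt : Finset V) (hτtX : τt ∈ C.X) (hτtc : τt.card = n)
    (hτt₁ : rslt τ₀ τt) (hτt₂ : rlev τ₀ ≤ rlev τt) (hτt₃ : rlev τt < rlev τ₀ + ε)
    (hτt₄ : (some ωt : Cell V) ∉ KV C (Egt C rslt τt) (some ω₀))
    (hτt₅ : (some ωt : Cell V) ∈ KV C (Ege C rslt τt) (some ω₀))
    (ωe ωe' : Cell V) (hfe : faceCell C τ₀ ωe) (hfe' : faceCell C τ₀ ωe')
    (hee : ωe ≠ ωe') (hin : ωe ∈ KV C (Egt C rslt τ₀) (some ω₀))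
    (ω₁ : Cell V) (hω₁ : IsMaxCell rslt (KV C (Egt C rslt τ₀) ωe') ω₁)
    (cstart : Cell V) (hcst : cstart ∈ KV C (Egt C rslt τt) (some ωt))
    (vs : List (Cell V)) (es : List (Finset V))
    (hT : IsPath C (Egt C rslt τ₀) cstart ωe vs es) (hnd : vs.Nodup)
    (havoid : ∀ c ∈ vs, c ∉ KV C (Egt C rslt τt) (some ω₀)) :
    ∀ η : ℝ, η = (rlev τt - rlev τ₀ + ε) / 4 →
      ∀ A : Set (Finset V),
        A = compEdges C (Egt C rslt τt) (some ωt) ∪ {τ | τ ∈ es} ∪ {τ₀} ∪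
          compEdges C (Egt C rslt τ₀) ω₁ →
        InR C rlev rslt ω₀ ε (pertLev C rlev η A) (pertSlt C rlev rslt η A) ∧
        IsPersPair C (pertSlt C rlev rslt η A) τt ω₀ ∧
        (∀ τ : Finset V,
          IsPersPair C (pertSlt C rlev rslt η A) τ ω₀ → τ = τt) ∧
        (some ωt : Cell V) ∉ OV C (pertSlt C rlev rslt η A) ω₀ :=
  case_two_of_claim_general C htwo rlev rslt hr τ₀ ω₀ hpair ε hε ωt τt hτtX hτtc hτt₁ hτt₂ hτt₃ hτt₄
    hτt₅ ωe ωe' hfe hfe' hee hin ω₁ hω₁ cstart hcst vs es hT havoid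

end StableVol
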